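/- Let h = 2^10. Suppose the shortest s–v path in the weighted disk graph G contains an irregular edge uv (i.e., max(r_u, r_v) ≥ h·min(r_u, r_v)), where u ≠ s is the predecessor of v in the shortest path tree T, and v is not a leaf of T. Then |uv| ≥ (1 − 1/h)·max(r_u, r_v). -/

import Mathlib

noncomputable section

/-- Points of the plane. -/
abbrev Pt := EuclideanSpace ℝ (Fin 2)

/-- Membership in the closed axis-parallel square of Euclidean diameter `d`
(side `d/√2`) centered at `p`. -/
def inSq (p : Pt) (d : ℝ) (x : Pt) : Prop :=
  ∀ i, |x i - p i| ≤ d / (2 * Real.sqrt 2)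

/-- Adjacency in the weighted disk graph: distinct points whose disks intersect. -/
def Adj (r : Pt → ℝ) (x y : Pt) : Prop := x ≠ y ∧ dist x y ≤ r x + r y

/-- A (simple) path from `s` to `v` in the weighted disk graph on `P`. -/
def IsPath (P : Set Pt) (r : Pt → ℝ) (s v : Pt) (L : List Pt) : Prop :=
  L.head? = some s ∧ L.getLast? = some v ∧ (∀ x ∈ L, x ∈ P) ∧ L.Nodup ∧ L.Chain' (Adj r)

/-- The length of a path: the sum of the Euclidean lengths of its edges. -/
def pathLen : List Pt → ℝ
  | [] => 0
  | [_] => 0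
  | a :: b :: L => dist a b + pathLen (b :: L)

/-- Shortest-path distance from `s` to `v` in the weighted disk graph on `P`. -/
def spDist (P : Set Pt) (r : Pt → ℝ) (s v : Pt) : ℝ :=
  sInf (pathLen '' {L | IsPath P r s v L})

/-! If `|uv|` were shorter than `(1 - 1/h)·max(r_u, r_v)`, the larger disk would reach one tree
step further. When `r_u` is the larger radius, `u` is adjacent to a child `x` of `v`, since
`|ux| ≤ |uv| + r_v + r_x < (1 - 1/h)·r_u + r_u/h + r_x`; when `r_v` is larger, the parent of `u` is
adjacent to `v` in the same way. Such an edge skips a vertex of the shortest path tree, and going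
around it or along it gives two distinct shortest paths. -/

lemma pathLen_nonneg : ∀ L : List Pt, 0 ≤ pathLen L
  | [] => le_rfl
  | [_] => le_rfl
  | _ :: b :: L => add_nonneg dist_nonneg (pathLen_nonneg (b :: L))

lemma pathLen_append_singleton : ∀ {L : List Pt} {a : Pt} (y : Pt), L.getLast? = some a →
    pathLen (L ++ [y]) = pathLen L + dist a y
  | [], _, _, h => by simp at h
  | [b], a, y, h => by
      obtain rfl : b = a := by simpa using h
      simp [pathLen]
  | b :: c :: L, a, y, h => by
      rw [List.getLast?_cons_cons] at h
      simp only [List.cons_append, pathLen]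
      rw [← List.cons_append, pathLen_append_singleton y h, add_assoc]

lemma pathLen_le_pathLen_append : ∀ M N : List Pt, pathLen M ≤ pathLen (M ++ N)
  | [], N => pathLen_nonneg N
  | [_], N => pathLen_nonneg _
  | a :: b :: M, N => by
      simpa only [List.cons_append, pathLen, add_le_add_iff_left]
        using pathLen_le_pathLen_append (b :: M) N

def IsShortestPath (P : Set Pt) (r : Pt → ℝ) (s v : Pt) (L : List Pt) : Prop :=
  IsPath P r s v L ∧ pathLen L = spDist P r s v

section ShortestPaths

variable {P : Set Pt} {r : Pt → ℝ} {s : Pt}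

lemma spDist_le_pathLen {x : Pt} {L : List Pt} (hL : IsPath P r s x L) :
    spDist P r s x ≤ pathLen L :=
  csInf_le ⟨0, by rintro _ ⟨M, _, rfl⟩; exact pathLen_nonneg M⟩ ⟨L, hL, rfl⟩

lemma IsPath.append_singleton {a y : Pt} {L : List Pt} (hL : IsPath P r s a L) (hy : y ∈ P)
    (hay : Adj r a y) (hyL : y ∉ L) : IsPath P r s y (L ++ [y]) := by
  obtain ⟨hhead, hlast, hmem, hnodup, hchain⟩ := hL
  refine ⟨by rw [List.head?_append, hhead]; rfl, List.getLast?_concat, ?_, ?_, ?_⟩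
  · simpa [or_imp, forall_and, hy] using hmem
  · exact List.nodup_append'.2 ⟨hnodup, List.nodup_singleton y, by simpa using hyL⟩
  · refine List.isChain_append.2 ⟨hchain, List.isChain_singleton y, ?_⟩
    simp_all

lemma spDist_le_pathLen_of_mem {a x : Pt} {L : List Pt} (hL : IsPath P r s a L) (hx : x ∈ L) :
    spDist P r s x ≤ pathLen L := by
  obtain ⟨L₁, L₂, rfl⟩ := List.append_of_mem hx
  obtain ⟨hhead, -, hmem, hnodup, hchain⟩ := hL
  have hpre : L₁ ++ [x] <+: L₁ ++ x :: L₂ := ⟨L₂, by simp⟩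
  have hprefix : IsPath P r s x (L₁ ++ [x]) := by
    refine ⟨?_, List.getLast?_concat, fun z hz ↦ hmem z (hpre.subset hz),
      hnodup.sublist hpre.sublist, hchain.prefix hpre⟩
    rw [List.head?_append] at hhead ⊢
    simpa using hhead
  calc spDist P r s x ≤ pathLen (L₁ ++ [x]) := spDist_le_pathLen hprefix
    _ ≤ pathLen (L₁ ++ [x] ++ L₂) := pathLen_le_pathLen_append _ _
    _ = pathLen (L₁ ++ x :: L₂) := by simp

lemma IsShortestPath.append_singleton {a y : Pt} {L : List Pt}
    (hL : IsShortestPath P r s a L) (hy : y ∈ P) (hay : Adj r a y)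
    (hle : spDist P r s a + dist a y ≤ spDist P r s y) :
    IsShortestPath P r s y (L ++ [y]) := by
  obtain ⟨hpath, hlen⟩ := hL
  have hyL : y ∉ L := fun hyL ↦ by
    have := spDist_le_pathLen_of_mem hpath hyL
    linarith [dist_pos.2 hay.1]
  have hpath' := hpath.append_singleton hy hay hyL
  refine ⟨hpath', le_antisymm ?_ (spDist_le_pathLen hpath')⟩
  rwa [pathLen_append_singleton y hpath.2.1, hlen]

lemma lt_dist_of_tree_edge_tree_edge
    (huniq : ∀ v ∈ P, ∃! L, IsShortestPath P r s v L)
    {a b c : Pt} (ha : a ∈ P) (hb : b ∈ P) (hc : c ∈ P)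
    (hab : Adj r a b) (hbc : Adj r b c)
    (hdb : spDist P r s b = spDist P r s a + dist a b)
    (hdc : spDist P r s c = spDist P r s b + dist b c) :
    r a + r c < dist a c := by
  by_contra! hdist
  have hac : a ≠ c := by
    rintro rfl
    linarith [dist_pos.2 hab.1, dist_pos.2 hbc.1]
  obtain ⟨L, hL, -⟩ := huniq a ha
  have hdirect : IsShortestPath P r s c (L ++ [c]) :=
    hL.append_singleton hc ⟨hac, hdist⟩ (by linarith [dist_triangle a b c])
  have hdetour : IsShortestPath P r s c (L ++ [b] ++ [c]) :=
    (hL.append_singleton hb hab hdb.ge).append_singleton hc hbc hdc.ge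
  have := congrArg List.length ((huniq c hc).unique hdirect hdetour)
  simp at this

end ShortestPaths

theorem irregular_predecessor_edge_long_arbitrary_general
    (P : Set Pt) (r : Pt → ℝ)
    (s : Pt)
    (huniq : ∀ v ∈ P, ∃! L, IsPath P r s v L ∧ pathLen L = spDist P r s v)
    (prv : Pt → Pt)
    (hprv : ∀ v ∈ P, v ≠ s → prv v ∈ P ∧ Adj r (prv v) v ∧
      spDist P r s v = spDist P r s (prv v) + dist (prv v) v)
    (v : Pt) (hv : v ∈ P) (hvs : v ≠ s) (hus : prv v ≠ s)
    (hirr : 1024 * min (r (prv v)) (r v) ≤ max (r (prv v)) (r v))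
    (hleaf : ∃ x ∈ P, x ≠ s ∧ prv x = v) :
    (1 - 1 / 1024) * max (r (prv v)) (r v) ≤ dist (prv v) v := by
  by_contra! hshort
  obtain ⟨hu, huv, hdv⟩ := hprv v hv hvs
  rcases le_total (r v) (r (prv v)) with hle | hle
  · rw [max_eq_left hle] at hirr hshort
    rw [min_eq_right hle] at hirr
    obtain ⟨x, hx, hxs, rfl⟩ := hleaf
    obtain ⟨-, hvx, hdx⟩ := hprv x hx hxs
    have := lt_dist_of_tree_edge_tree_edge huniq hu hv hx huv hvx hdv hdx
    linarith [dist_triangle (prv (prv x)) (prv x) x, hvx.2]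
  · rw [max_eq_right hle] at hirr hshort
    rw [min_eq_left hle] at hirr
    obtain ⟨hw, hwu, hdu⟩ := hprv (prv v) hu hus
    have := lt_dist_of_tree_edge_tree_edge huniq hw hu hv hwu huv hdu hdv
    linarith [dist_triangle (prv (prv v)) (prv v) v, hwu.2]

/-- Let `h = 2^10 = 1024`. Assume every vertex of `P` is connected to
`s` and shortest paths from `s` are unique, and let `prv` be the predecessor function of
the resulting shortest path tree `T` rooted at `s`. Suppose the shortest `s`–`v` path
contains an irregular edge `uv` where `u = prv v ≠ s`
(irregular: `h·min(r u, r v) ≤ max(r u, r v)`), and `v` is not a leaf of `T`. Then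
`|uv| ≥ (1 − 1/h)·max(r u, r v)`. -/
theorem irregular_predecessor_edge_long_arbitrary
    (P : Set Pt) (r : Pt → ℝ) (hr : ∀ p ∈ P, 1 ≤ r p)
    (s : Pt) (hs : s ∈ P)
    (hconn : ∀ v ∈ P, ∃ L, IsPath P r s v L)
    (huniq : ∀ v ∈ P, ∃! L, IsPath P r s v L ∧ pathLen L = spDist P r s v)
    (prv : Pt → Pt)
    (hprv : ∀ v ∈ P, v ≠ s → prv v ∈ P ∧ Adj r (prv v) v ∧
      spDist P r s v = spDist P r s (prv v) + dist (prv v) v)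
    (v : Pt) (hv : v ∈ P) (hvs : v ≠ s) (hus : prv v ≠ s)
    (hirr : 1024 * min (r (prv v)) (r v) ≤ max (r (prv v)) (r v))
    (hleaf : ∃ x ∈ P, x ≠ s ∧ prv x = v) :
    (1 - 1 / 1024) * max (r (prv v)) (r v) ≤ dist (prv v) v :=
  irregular_predecessor_edge_long_arbitrary_general P r s huniq prv hprv v hv hvs hus hirr hleaf
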